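/- An Apollonian network with n vertices contains exactly n - 3 subgraphs isomorphic to the complete graph K4. -/

import Mathlib

open SimpleGraph

/-- The complete graph `K4` on the vertices `{0,1,2,3}` of `ℕ`. -/
def K4n : SimpleGraph ℕ where
  Adj x y := x ≠ y ∧ x < 4 ∧ y < 4
  symm := ⟨fun _ _ h => ⟨h.1.symm, h.2.2, h.2.1⟩⟩
  loopless := ⟨fun _ h => h.1 rfl⟩

/-- Add a new apex vertex `v` joined to the three vertices `a`, `b`, `c`. -/
def addApex (G : SimpleGraph ℕ) (v a b c : ℕ) : SimpleGraph ℕ :=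
  G ⊔ SimpleGraph.fromEdgeSet {s(v, a), s(v, b), s(v, c)}

/-- `ApollonianF G Fs` : `G` is an Apollonian network with set of (triangular) faces `Fs`,
built from `K4` by recursively subdividing a triangular face. -/
inductive ApollonianF : SimpleGraph ℕ → Set (Finset ℕ) → Prop
  | base : ApollonianF K4n {{0, 1, 2}, {0, 1, 3}, {0, 2, 3}, {1, 2, 3}}
  | subdivide (G : SimpleGraph ℕ) (Fs : Set (Finset ℕ)) (a b c v : ℕ) :
      ApollonianF G Fs → ({a, b, c} : Finset ℕ) ∈ Fs →
      (∀ y, ¬ G.Adj v y) →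
      ApollonianF (addApex G v a b c)
        ((Fs \ {({a, b, c} : Finset ℕ)}) ∪ {{v, a, b}, {v, a, c}, {v, b, c}})

/-- A graph (on vertex set its support) is an Apollonian network. -/
def IsApollonian (G : SimpleGraph ℕ) : Prop := ∃ Fs, ApollonianF G Fs

/-- The triangles (sets of three pairwise adjacent vertices) of `G`. -/
def triangleSet (G : SimpleGraph ℕ) : Set (Finset ℕ) :=
  {t | ∃ a b c : ℕ, t = {a, b, c} ∧ G.Adj a b ∧ G.Adj a c ∧ G.Adj b c}

/-- A triangle is separating if deleting its vertices disconnects the graph. -/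
def IsSeparatingTriangle (G : SimpleGraph ℕ) (t : Finset ℕ) : Prop :=
  t ∈ triangleSet G ∧ ¬ (G.induce (G.support \ ↑t)).Connected

/-- `G` is (isomorphic to) the complete graph on four vertices. -/
def IsK4Graph (G : SimpleGraph ℕ) : Prop :=
  ∃ s : Finset ℕ, ↑s = G.support ∧ s.card = 4 ∧ ∀ a ∈ s, ∀ b ∈ s, a ≠ b → G.Adj a b

/-- Delete the vertex `v` (and all incident edges). -/
def deleteVertex (G : SimpleGraph ℕ) (v : ℕ) : SimpleGraph ℕ where
  Adj x y := G.Adj x y ∧ x ≠ v ∧ y ≠ v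
  symm := ⟨fun _ _ h => ⟨h.1.symm, h.2.2, h.2.1⟩⟩
  loopless := ⟨fun x h => G.loopless.irrefl x h.1⟩

/-- The subgraphs of `G` isomorphic to `K4` (sets of four pairwise adjacent vertices). -/
def k4Subgraphs (G : SimpleGraph ℕ) : Set (Finset ℕ) :=
  {s | s.card = 4 ∧ ∀ a ∈ s, ∀ b ∈ s, a ≠ b → G.Adj a b}

/-! Each subdivision step adds one vertex `v` and, since the neighbours of `v` are exactly the
three vertices `a, b, c` of the subdivided face, exactly one `K4`, namely `{v, a, b, c}`. The
base graph `K4` has four vertices and one `K4`, so the number of `K4`s plus three is the number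
of vertices throughout. -/

lemma k4Subgraphs_eq_cliqueSet (G : SimpleGraph ℕ) : k4Subgraphs G = G.cliqueSet 4 := by
  ext s
  simp only [mem_cliqueSet_iff, isNClique_iff, IsClique, Set.Pairwise, Finset.mem_coe]
  exact and_comm

lemma support_K4n : K4n.support = ↑(Finset.range 4) := by
  ext x
  simp only [mem_support, Finset.coe_range, Set.mem_Iio]
  exact ⟨fun ⟨_, _, hx, _⟩ => hx, fun hx => ⟨(x + 1) % 4, by omega, hx, by omega⟩⟩

lemma cliqueSet_K4n : K4n.cliqueSet 4 = {Finset.range 4} := by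
  ext s
  rw [mem_cliqueSet_iff, Set.mem_singleton_iff]
  constructor
  · intro hs
    refine Finset.eq_of_subset_of_card_le (fun x hx => ?_) (by simp [hs.card_eq])
    obtain ⟨y, hy, hyx⟩ := Finset.exists_mem_ne (s := s) (by simp [hs.card_eq]) x
    exact Finset.mem_range.mpr (hs.isClique hx hy hyx.symm).2.1
  · rintro rfl
    exact ⟨fun x hx y hy hxy => ⟨hxy, Finset.mem_range.mp hx, Finset.mem_range.mp hy⟩, by simp⟩

section addApex

variable {G : SimpleGraph ℕ} {v a b c x y : ℕ}

lemma le_addApex : G ≤ addApex G v a b c := le_sup_left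

lemma addApex_adj_iff :
    (addApex G v a b c).Adj x y ↔
      G.Adj x y ∨ (s(x, y) = s(v, a) ∨ s(x, y) = s(v, b) ∨ s(x, y) = s(v, c)) ∧ x ≠ y := by
  simp [addApex, fromEdgeSet_adj]

lemma addApex_adj_iff_of_ne (hx : x ≠ v) (hy : y ≠ v) :
    (addApex G v a b c).Adj x y ↔ G.Adj x y := by
  rw [addApex_adj_iff]
  aesop

lemma mem_of_addApex_adj_apex (hv : v ∉ G.support) (h : (addApex G v a b c).Adj v y) :
    y ∈ ({a, b, c} : Finset ℕ) := by
  rcases addApex_adj_iff.mp h with h | ⟨h, -⟩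
  · exact absurd ⟨y, h⟩ hv
  · simp only [Sym2.eq, Sym2.rel_iff', Prod.mk.injEq, Prod.swap_prod_mk] at h
    simp only [Finset.mem_insert, Finset.mem_singleton]
    omega

variable (hv : v ∉ G.support) (habc : G.IsNClique 3 {a, b, c})
include hv habc

lemma addApex_adj_apex (hx : x ∈ ({a, b, c} : Finset ℕ)) : (addApex G v a b c).Adj v x := by
  have hx_supp : x ∈ G.support := by
    obtain ⟨y, hy, hyx⟩ := Finset.exists_mem_ne (s := {a, b, c}) (by simp [habc.card_eq]) x
    exact ⟨y, habc.isClique hx hy hyx.symm⟩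
  have hvx : v ≠ x := by rintro rfl; exact hv hx_supp
  simp only [Finset.mem_insert, Finset.mem_singleton] at hx
  rw [addApex_adj_iff]
  aesop

lemma support_addApex : (addApex G v a b c).support = insert v G.support := by
  ext x
  refine ⟨fun ⟨y, hxy⟩ => ?_, ?_⟩
  · by_cases hx : x = v
    · exact .inl hx
    by_cases hy : y = v
    · subst hy
      obtain ⟨z, hz, hzx⟩ :=
        Finset.exists_mem_ne (s := {a, b, c}) (by simp [habc.card_eq]) x
      exact .inr ⟨z, habc.isClique (mem_of_addApex_adj_apex hv hxy.symm) hz hzx.symm⟩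
    · exact .inr ⟨y, (addApex_adj_iff_of_ne hx hy).mp hxy⟩
  · rintro (rfl | hx)
    · exact ⟨a, addApex_adj_apex hv habc (by simp)⟩
    · exact support_mono le_addApex hx

lemma isNClique_addApex : (addApex G v a b c).IsNClique 4 {v, a, b, c} :=
  (habc.mono le_addApex).insert fun _ => addApex_adj_apex hv habc

lemma cliqueSet_addApex :
    (addApex G v a b c).cliqueSet 4 = insert {v, a, b, c} (G.cliqueSet 4) := by
  ext s
  simp only [Set.mem_insert_iff, mem_cliqueSet_iff]
  constructor
  · intro hs
    by_cases hvs : v ∈ s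
    · refine .inl (Finset.eq_of_subset_of_card_le (fun x hx => ?_) ?_)
      · by_cases hxv : x = v
        · simp [hxv]
        · exact Finset.mem_insert_of_mem
            (mem_of_addApex_adj_apex hv (hs.isClique hvs hx (Ne.symm hxv)))
      · rw [hs.card_eq, (isNClique_addApex hv habc).card_eq]
    · refine .inr ⟨fun x hx y hy hxy => ?_, hs.card_eq⟩
      exact (addApex_adj_iff_of_ne (ne_of_mem_of_not_mem hx hvs)
        (ne_of_mem_of_not_mem hy hvs)).mp (hs.isClique hx hy hxy)
  · rintro (rfl | hs)
    · exact isNClique_addApex hv habc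
    · exact hs.mono le_addApex

lemma apex_clique_notMem_cliqueSet : ({v, a, b, c} : Finset ℕ) ∉ G.cliqueSet 4 := by
  intro hs
  have hva : v ≠ a := fun h => hv ⟨b, h ▸ (is3Clique_triple_iff.mp habc).1⟩
  exact hv ⟨a, (mem_cliqueSet_iff.mp hs).isClique (by simp) (by simp) hva⟩

end addApex

lemma ApollonianF.isNClique_of_mem {G : SimpleGraph ℕ} {Fs : Set (Finset ℕ)}
    (h : ApollonianF G Fs) {t : Finset ℕ} (ht : t ∈ Fs) : G.IsNClique 3 t := by
  induction h generalizing t with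
  | base =>
    simp only [Set.mem_insert_iff, Set.mem_singleton_iff] at ht
    rcases ht with rfl | rfl | rfl | rfl <;> exact is3Clique_triple_iff.mpr (by simp [K4n])
  | subdivide G Fs a b c v _ hface hv ih =>
    have hv' : v ∉ G.support := fun ⟨y, hy⟩ => hv y hy
    have habc := ih hface
    have apex := fun x hx => addApex_adj_apex (x := x) hv' habc hx
    obtain ⟨hab, hac, hbc⟩ := is3Clique_triple_iff.mp habc
    rcases ht with ⟨ht, -⟩ | ht
    · exact (ih ht).mono le_addApex
    simp only [Set.mem_insert_iff, Set.mem_singleton_iff] at ht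
    rcases ht with rfl | rfl | rfl <;> refine is3Clique_triple_iff.mpr ⟨?_, ?_, ?_⟩ <;>
      first | exact apex _ (by simp) | exact le_addApex ‹_›

lemma ApollonianF.encard_cliqueSet_add_three {G : SimpleGraph ℕ} {Fs : Set (Finset ℕ)}
    (h : ApollonianF G Fs) : (G.cliqueSet 4).encard + 3 = G.support.encard := by
  induction h with
  | base =>
    rw [cliqueSet_K4n, support_K4n, Set.encard_singleton, Set.encard_coe_eq_coe_finsetCard]
    rfl
  | subdivide G Fs a b c v hG hface hv ih =>
    have hv' : v ∉ G.support := fun ⟨y, hy⟩ => hv y hy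
    have habc := hG.isNClique_of_mem hface
    rw [cliqueSet_addApex hv' habc, support_addApex hv' habc,
      Set.encard_insert_of_notMem (apex_clique_notMem_cliqueSet hv' habc),
      Set.encard_insert_of_notMem hv', ← ih]
    ring

/-- An Apollonian network with `n` vertices contains exactly `n - 3`
subgraphs isomorphic to `K4`. -/
theorem stmt_2 (G : SimpleGraph ℕ) (hG : IsApollonian G) (n : ℕ)
    (hn : G.support.ncard = n) :
    (k4Subgraphs G).ncard = n - 3 := by
  obtain ⟨Fs, h⟩ := hG
  rw [← hn, k4Subgraphs_eq_cliqueSet, Set.ncard_def, Set.ncard_def,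
    ← h.encard_cliqueSet_add_three]
  -- counting with `encard` needs no finiteness: an infinite count would make both sides `0`
  cases (G.cliqueSet 4).encard using ENat.recTopCoe with
  | top => rfl
  | coe m => norm_cast
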